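/- Let N and N' be binary phylogenetic networks and c a pair that is reducible in both N and N'. If N'c is a subnetwork of Nc, then N' is a subnetwork of N. -/

import Mathlib

open scoped Classical

/-- A (representation of a) rooted phylogenetic network: vertices are natural
numbers, `E` is the edge set, `root` the root, `taxa` the set of taxa labelling
the leaves via `label`. -/
structure Network (X : Type) where
  V : Finset ℕ
  E : Finset (ℕ × ℕ)
  root : ℕ
  taxa : Finset X
  label : X → ℕ

namespace Network

variable {X : Type}

noncomputable def indeg (N : Network X) (v : ℕ) : ℕ :=
  (N.E.filter (fun e => e.2 = v)).card

noncomputable def outdeg (N : Network X) (v : ℕ) : ℕ :=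
  (N.E.filter (fun e => e.1 = v)).card

noncomputable def parents (N : Network X) (v : ℕ) : Finset ℕ :=
  (N.E.filter (fun e => e.2 = v)).image Prod.fst

noncomputable def children (N : Network X) (v : ℕ) : Finset ℕ :=
  (N.E.filter (fun e => e.1 = v)).image Prod.snd

/-- The parent of a vertex (meaningful when the vertex has a unique parent,
e.g. for leaves). -/
noncomputable def theParent (N : Network X) (v : ℕ) : ℕ :=
  WithTop.untopD 0 (N.parents v).min

def IsLeafNode (N : Network X) (v : ℕ) : Prop := N.indeg v = 1 ∧ N.outdeg v = 0

def IsTreeNode (N : Network X) (v : ℕ) : Prop := N.indeg v = 1 ∧ 2 ≤ N.outdeg v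

def IsRetic (N : Network X) (v : ℕ) : Prop := 2 ≤ N.indeg v ∧ N.outdeg v = 1

/-- Well-formedness: a phylogenetic network has a single outdegree-1, indegree-0
root, leaves bijectively labelled by the taxa, all other nodes tree nodes or
reticulations, and it is acyclic. -/
def IsPhylo (N : Network X) : Prop :=
  N.root ∈ N.V ∧ N.indeg N.root = 0 ∧ N.outdeg N.root = 1 ∧
  (∀ e ∈ N.E, e.1 ∈ N.V ∧ e.2 ∈ N.V) ∧
  Set.InjOn N.label ↑N.taxa ∧
  (∀ x ∈ N.taxa, N.label x ∈ N.V ∧ N.IsLeafNode (N.label x)) ∧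
  (∀ v ∈ N.V, N.IsLeafNode v → ∃ x ∈ N.taxa, N.label x = v) ∧
  (∀ v ∈ N.V, v = N.root ∨ N.IsLeafNode v ∨ N.IsTreeNode v ∨ N.IsRetic v) ∧
  (∀ v : ℕ, ¬ Relation.TransGen (fun a b => (a, b) ∈ N.E) v v)

def SemiBinary (N : Network X) : Prop := ∀ v ∈ N.V, N.IsTreeNode v → N.outdeg v = 2

def IsBinary (N : Network X) : Prop :=
  N.SemiBinary ∧ ∀ v ∈ N.V, N.IsRetic v → N.indeg v = 2

def StackFree (N : Network X) : Prop :=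
  ∀ e ∈ N.E, ¬ (N.IsRetic e.1 ∧ N.IsRetic e.2)

def IsTreeChild (N : Network X) : Prop :=
  N.StackFree ∧
  ∀ v ∈ N.V, N.IsTreeNode v → ∃ c ∈ N.children v, N.IsTreeNode c ∨ N.IsLeafNode c

def IsTree (N : Network X) : Prop := ∀ v ∈ N.V, ¬ N.IsRetic v

/-- Number of reticulation edges minus number of reticulations. -/
noncomputable def reticulationNumber (N : Network X) : ℕ :=
  (N.E.filter (fun e => N.IsRetic e.2)).card - (N.V.filter (fun v => N.IsRetic v)).card

/-- `(x, y)` is a cherry: two distinct leaves sharing a parent. -/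
def IsCherry (N : Network X) (x y : X) : Prop :=
  x ∈ N.taxa ∧ y ∈ N.taxa ∧ x ≠ y ∧
  ∃ p : ℕ, (p, N.label x) ∈ N.E ∧ (p, N.label y) ∈ N.E

/-- `(x, y)` is a reticulated cherry: the parent of `x` is a reticulation, the
parent of `y` a tree node which is also a parent of the parent of `x`. -/
def IsRetCherry (N : Network X) (x y : X) : Prop :=
  x ∈ N.taxa ∧ y ∈ N.taxa ∧ x ≠ y ∧
  ∃ px py : ℕ, (px, N.label x) ∈ N.E ∧ (py, N.label y) ∈ N.E ∧
    N.IsRetic px ∧ N.IsTreeNode py ∧ (py, px) ∈ N.E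

def ReduciblePair (N : Network X) (x y : X) : Prop :=
  N.IsCherry x y ∨ N.IsRetCherry x y

noncomputable def delVert (N : Network X) (v : ℕ) : Network X :=
  { V := N.V.erase v,
    E := N.E.filter (fun e => e.1 ≠ v ∧ e.2 ≠ v),
    root := N.root, taxa := N.taxa, label := N.label }

noncomputable def delEdge (N : Network X) (e : ℕ × ℕ) : Network X :=
  { N with E := N.E.erase e }

/-- Suppress a degree-2 (indegree-1, outdegree-1) vertex. -/
noncomputable def suppress (N : Network X) (v : ℕ) : Network X :=
  if N.indeg v = 1 ∧ N.outdeg v = 1 then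
    { V := N.V.erase v,
      E := (N.E.filter (fun e => e.1 ≠ v ∧ e.2 ≠ v)) ∪ (N.parents v ×ˢ N.children v),
      root := N.root, taxa := N.taxa, label := N.label }
  else N

/-- Reduce an ordered pair `(x, y)`: in the cherry case delete the leaf `x` and
suppress its parent; in the reticulated-cherry case delete the reticulation edge
between the two parents and suppress the resulting degree-2 vertices; otherwise
do nothing. -/
noncomputable def reducePair (N : Network X) (c : X × X) : Network X :=
  if N.IsCherry c.1 c.2 then
    suppress
      { V := N.V.erase (N.label c.1),
        E := N.E.filter (fun e => e.1 ≠ N.label c.1 ∧ e.2 ≠ N.label c.1),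
        root := N.root, taxa := N.taxa.erase c.1, label := N.label }
      (N.theParent (N.label c.1))
  else if N.IsRetCherry c.1 c.2 then
    (((N.delEdge (N.theParent (N.label c.2), N.theParent (N.label c.1))).suppress
        (N.theParent (N.label c.2))).suppress (N.theParent (N.label c.1)))
  else N

/-- Successive reduction of a network by a sequence of ordered pairs. -/
noncomputable def reduceSeq (N : Network X) (S : List (X × X)) : Network X :=
  S.foldl (fun M c => M.reducePair c) N

/-- A network consisting of a single leaf, its root, and the edge between them. -/
def IsSingleLeaf (N : Network X) : Prop :=
  ∃ x ∈ N.taxa, N.V = {N.root, N.label x} ∧ N.E = {(N.root, N.label x)} ∧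
    N.root ≠ N.label x

/-- `S` reduces `N` to a single-leaf network. -/
def Reduces (S : List (X × X)) (N : Network X) : Prop :=
  (N.reduceSeq S).IsSingleLeaf

/-- A cherry-picking sequence: ordered pairs of distinct taxa such that each
second coordinate reappears later as a first coordinate, or is the second
coordinate of the last pair. -/
def IsCPS (S : List (X × X)) : Prop :=
  (∀ p ∈ S, p.1 ≠ p.2) ∧
  ∀ (i : ℕ) (hi : i < S.length),
    ((S.get ⟨i, hi⟩).2 ∈ (S.drop (i + 1)).map Prod.fst) ∨
    (∃ q, S.getLast? = some q ∧ (S.get ⟨i, hi⟩).2 = q.2)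

/-- A tree-child sequence: a CPS in which a leaf appearing as a first coordinate
never appears later as a second coordinate. -/
def IsTCS (S : List (X × X)) : Prop :=
  IsCPS S ∧
  ∀ (i j : ℕ) (hi : i < S.length) (hj : j < S.length),
    i < j → (S.get ⟨i, hi⟩).1 ≠ (S.get ⟨j, hj⟩).2

def IsPartialCPS (S : List (X × X)) : Prop := ∃ T, IsCPS (S ++ T)

def IsPartialTCS (S : List (X × X)) : Prop := ∃ T, IsTCS (S ++ T)

/-- A minimal CPS for `N`: a CPS reducing `N` in which every pair changes the
network. -/
def IsMinimalCPS (S : List (X × X)) (N : Network X) : Prop :=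
  IsCPS S ∧ Reduces S N ∧
  ∀ i < S.length, N.reduceSeq (S.take (i + 1)) ≠ N.reduceSeq (S.take i)

def IsMinimalTCS (S : List (X × X)) (N : Network X) : Prop :=
  IsTCS S ∧ Reduces S N ∧
  ∀ i < S.length, N.reduceSeq (S.take (i + 1)) ≠ N.reduceSeq (S.take i)

/-- A cherry-picking network: a phylogenetic network reducible by some CPS. -/
def IsCPN (N : Network X) : Prop :=
  N.IsPhylo ∧ ∃ S, IsCPS S ∧ Reduces S N

/-- A directed path in `N`, given as its list of vertices. -/
def IsDipath (N : Network X) (l : List ℕ) : Prop :=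
  l.Chain' (fun a b => (a, b) ∈ N.E)

def pathEdges (l : List ℕ) : List (ℕ × ℕ) := l.zip l.tail

/-- An embedding of `N'` into `N`: an injective node map and a map of edges to
edge-disjoint directed paths, respecting the node map and the leaf labels. -/
def IsEmbedding (N' N : Network X) (f : ℕ → ℕ) (g : ℕ × ℕ → List ℕ) : Prop :=
  (∀ v ∈ N'.V, f v ∈ N.V) ∧
  Set.InjOn f ↑N'.V ∧
  (∀ x ∈ N'.taxa, f (N'.label x) = N.label x) ∧
  (∀ e ∈ N'.E, N.IsDipath (g e) ∧ (g e).head? = some (f e.1) ∧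
    (g e).getLast? = some (f e.2)) ∧
  (∀ e ∈ N'.E, ∀ e' ∈ N'.E, e ≠ e' →
    ∀ p ∈ pathEdges (g e), p ∉ pathEdges (g e'))

/-- `N'` is a subnetwork of `N` if `N'` embeds into `N`. -/
def IsSubnetwork (N' N : Network X) : Prop :=
  ∃ f g, IsEmbedding N' N f g

/-- Contract the edge `(u, v)`, identifying `v` with `u`. -/
noncomputable def contractEdge (N : Network X) (u v : ℕ) : Network X :=
  { V := N.V.erase v,
    E := (N.E.erase (u, v)).image
      (fun e => ((if e.1 = v then u else e.1), (if e.2 = v then u else e.2))),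
    root := if N.root = v then u else N.root,
    taxa := N.taxa,
    label := fun x => if N.label x = v then u else N.label x }

def ContractStep (N M : Network X) : Prop :=
  ∃ u v : ℕ, (u, v) ∈ N.E ∧ M = N.contractEdge u v

/-- `N` is a refinement of `M` if `M` can be obtained from `N` by contracting
some edges. -/
def IsRefinement (N M : Network X) : Prop :=
  Relation.ReflTransGen ContractStep N M

/-- `N` contains `M` if some refinement of `M` is a subnetwork of `N`. -/
def Contains (N M : Network X) : Prop :=
  ∃ M' : Network X, IsRefinement M' M ∧ IsSubnetwork M' N

/-- Isomorphism of labelled networks. -/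
def Isomorphic (N N' : Network X) : Prop :=
  N.taxa = N'.taxa ∧
  ∃ f : ℕ → ℕ, Set.BijOn f ↑N.V ↑N'.V ∧
    (∀ u ∈ N.V, ∀ v ∈ N.V, ((u, v) ∈ N.E ↔ (f u, f v) ∈ N'.E)) ∧
    f N.root = N'.root ∧
    (∀ x ∈ N.taxa, f (N.label x) = N'.label x)

end Network

/-!
Both reductions are local surgeries: a cherry reduction deletes the leaf `x` and suppresses its
parent `p`; a reticulated-cherry reduction deletes the edge `py → px` and suppresses `py` and
`px`. An embedding of `N'c` into `Nc` is lifted by undoing these surgeries one at a time on both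
sides. Undoing a suppression sends the suppressed vertex of the guest `N'` to the suppressed
vertex `v` of the host `N`: the merged guest edge `a' → b'` ends in a leaf, so its path ends with
the merged host edge `a → b`, and it is rerouted through `v`. Edge-disjointness is checked
through an owner map sending each used host edge to the guest edge whose path contains it.

When `N'` has a cherry but `N` a reticulated cherry, no vertex of `N'c` is sent to the leaf `x`
of `Nc` (a vertex with an out-edge cannot be sent to a sink, and the other leaves keep their
labels), so `x` can be reattached along `py → px → x`. A reticulated cherry in `N'` and a cherry
in `N` cannot occur, as `N'c` keeps the leaf `x` and `Nc` does not.
-/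

namespace Network

variable {X : Type}

def IsSink (N : Network X) (v : ℕ) : Prop := ∀ e ∈ N.E, e.1 ≠ v

def IsSoleParent (N : Network X) (p v : ℕ) : Prop :=
  (p, v) ∈ N.E ∧ ∀ e ∈ N.E, e.2 = v → e.1 = p

def IsSoleChild (N : Network X) (v c : ℕ) : Prop :=
  (v, c) ∈ N.E ∧ ∀ e ∈ N.E, e.1 = v → e.2 = c

def IsSuppressible (N : Network X) (a v b : ℕ) : Prop :=
  N.IsSoleParent a v ∧ N.IsSoleChild v b

noncomputable def delLeaf (N : Network X) (t : X) : Network X :=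
  { N.delVert (N.label t) with taxa := N.taxa.erase t }

section Paths

variable {N : Network X}

lemma pathEdges_cons_cons (a b : ℕ) (l : List ℕ) :
    pathEdges (a :: b :: l) = (a, b) :: pathEdges (b :: l) := rfl

lemma isDipath_iff {l : List ℕ} : N.IsDipath l ↔ ∀ q ∈ pathEdges l, q ∈ N.E := by
  change List.IsChain _ l ↔ _
  induction l with
  | nil => simp [pathEdges]
  | cons a l ih =>
    cases l with
    | nil => simp [pathEdges]
    | cons b l =>
      simp only [List.isChain_cons_cons, pathEdges_cons_cons, List.forall_mem_cons] at ih ⊢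
      rw [ih]

lemma isDipath_pair {u v : ℕ} : N.IsDipath [u, v] ↔ (u, v) ∈ N.E := by
  simp [isDipath_iff, pathEdges]

lemma mem_of_mem_pathEdges {l : List ℕ} {q : ℕ × ℕ} (h : q ∈ pathEdges l) :
    q.1 ∈ l ∧ q.2 ∈ l :=
  ⟨(List.of_mem_zip h).1, List.mem_of_mem_tail (List.of_mem_zip h).2⟩

lemma pathEdges_append_pair (l : List ℕ) (w u : ℕ) :
    pathEdges (l ++ [w, u]) = pathEdges (l ++ [w]) ++ [(w, u)] := by
  induction l with
  | nil => rfl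
  | cons a l ih =>
    cases l with
    | nil => rfl
    | cons b l =>
      simp only [List.cons_append, pathEdges_cons_cons] at ih ⊢
      rw [ih]

lemma head?_append_pair (l : List ℕ) (w u u' : ℕ) :
    (l ++ [w, u]).head? = (l ++ [w, u']).head? := by
  cases l <;> rfl

lemma exists_eq_append_pair {l : List ℕ} {x y : ℕ} (hh : l.head? = some x)
    (hl : l.getLast? = some y) (hxy : x ≠ y) : ∃ L w, l = L ++ [w, y] := by
  rcases l.eq_nil_or_concat with rfl | ⟨m, u, rfl⟩
  · simp at hh
  rw [List.concat_eq_append, List.getLast?_concat, Option.some.injEq] at hl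
  subst hl
  rcases m.eq_nil_or_concat with rfl | ⟨L, w, rfl⟩
  · simp only [List.concat_eq_append, List.nil_append, List.head?_cons,
      Option.some.injEq] at hh
    exact absurd hh.symm hxy
  exact ⟨L, w, by simp⟩

/-- Every vertex of a dipath but the last has an out-edge. -/
lemma IsDipath.not_mem_of_isSink {l : List ℕ} {u b : ℕ} (h : N.IsDipath (l ++ [u]))
    (hb : N.IsSink b) : b ∉ l := by
  induction l with
  | nil => simp
  | cons a l ih =>
    change List.IsChain _ (a :: (l ++ [u])) at h
    rw [List.isChain_cons] at h
    rintro (_ | ⟨_, hbl⟩)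
    · obtain ⟨w, hw⟩ : ∃ w, (l ++ [u]).head? = some w := by cases l <;> simp
      exact hb _ (h.1 w hw) rfl
    · exact ih h.2 hbl

lemma IsDipath.getLast?_eq_of_isSink {l : List ℕ} {q : ℕ × ℕ} (h : N.IsDipath l)
    (hb : N.IsSink q.2) (hq : q ∈ pathEdges l) : l.getLast? = some q.2 := by
  rcases l.eq_nil_or_concat with rfl | ⟨m, u, rfl⟩
  · simp [pathEdges] at hq
  rw [List.concat_eq_append] at h hq ⊢
  rcases List.mem_append.mp (mem_of_mem_pathEdges hq).2 with hm | hu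
  · exact absurd hm (h.not_mem_of_isSink hb)
  · rw [List.mem_singleton.mp hu, List.getLast?_concat]

end Paths

lemma pathsDisjoint_iff_exists_owner {E : Finset (ℕ × ℕ)} {G : ℕ × ℕ → List ℕ} :
    (∀ e ∈ E, ∀ e' ∈ E, e ≠ e' → ∀ q ∈ pathEdges (G e), q ∉ pathEdges (G e')) ↔
      ∃ o : ℕ × ℕ → ℕ × ℕ, ∀ e ∈ E, ∀ q ∈ pathEdges (G e), o q = e := by
  constructor
  · intro hdisj
    refine ⟨fun q => if h : ∃ e ∈ E, q ∈ pathEdges (G e) then h.choose else q, ?_⟩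
    intro e he q hq
    have h : ∃ e ∈ E, q ∈ pathEdges (G e) := ⟨e, he, hq⟩
    simp only [dif_pos h]
    by_contra hne
    exact hdisj _ h.choose_spec.1 e he hne q h.choose_spec.2 hq
  · rintro ⟨o, ho⟩ e he e' he' hne q hq hq'
    exact hne ((ho e he q hq).symm.trans (ho e' he' q hq'))

lemma isEmbedding_of_owner {N' N : Network X} {F : ℕ → ℕ} {G : ℕ × ℕ → List ℕ}
    (o : ℕ × ℕ → ℕ × ℕ) (hV : ∀ v ∈ N'.V, F v ∈ N.V) (hinj : Set.InjOn F ↑N'.V)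
    (hlab : ∀ t ∈ N'.taxa, F (N'.label t) = N.label t)
    (hpath : ∀ e ∈ N'.E, (∀ q ∈ pathEdges (G e), q ∈ N.E ∧ o q = e) ∧
      (G e).head? = some (F e.1) ∧ (G e).getLast? = some (F e.2)) :
    IsEmbedding N' N F G :=
  ⟨hV, hinj, hlab, fun e he => ⟨isDipath_iff.mpr fun q hq => ((hpath e he).1 q hq).1,
    (hpath e he).2⟩, pathsDisjoint_iff_exists_owner.mpr
      ⟨o, fun e he q hq => ((hpath e he).1 q hq).2⟩⟩

lemma injOn_update {s : Finset ℕ} {f : ℕ → ℕ} {a b : ℕ}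
    (hinj : Set.InjOn f ↑(s.erase a)) (hb : ∀ u ∈ s.erase a, f u ≠ b) :
    Set.InjOn (Function.update f a b) ↑s := by
  intro u hu w hw huw
  by_cases hua : u = a <;> by_cases hwa : w = a
  · rw [hua, hwa]
  · subst hua
    rw [Function.update_self, Function.update_of_ne hwa] at huw
    exact absurd huw.symm (hb w (Finset.mem_erase.mpr ⟨hwa, hw⟩))
  · subst hwa
    rw [Function.update_self, Function.update_of_ne hua] at huw
    exact absurd huw (hb u (Finset.mem_erase.mpr ⟨hua, hu⟩))
  · rw [Function.update_of_ne hua, Function.update_of_ne hwa] at huw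
    exact hinj (Finset.mem_erase.mpr ⟨hua, hu⟩) (Finset.mem_erase.mpr ⟨hwa, hw⟩) huw

section Operations

variable {N : Network X}

@[simp] lemma delEdge_taxa (d : ℕ × ℕ) : (N.delEdge d).taxa = N.taxa := rfl
@[simp] lemma delEdge_label (d : ℕ × ℕ) : (N.delEdge d).label = N.label := rfl

lemma mem_delEdge_E {d e : ℕ × ℕ} : e ∈ (N.delEdge d).E ↔ e ≠ d ∧ e ∈ N.E :=
  Finset.mem_erase

@[simp] lemma delLeaf_V (t : X) : (N.delLeaf t).V = N.V.erase (N.label t) := rfl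
@[simp] lemma delLeaf_taxa (t : X) : (N.delLeaf t).taxa = N.taxa.erase t := rfl
@[simp] lemma delLeaf_label (t : X) : (N.delLeaf t).label = N.label := rfl

lemma mem_delLeaf_E {t : X} {e : ℕ × ℕ} :
    e ∈ (N.delLeaf t).E ↔ e ∈ N.E ∧ e.1 ≠ N.label t ∧ e.2 ≠ N.label t :=
  Finset.mem_filter

@[simp] lemma suppress_taxa (v : ℕ) : (N.suppress v).taxa = N.taxa := by
  unfold suppress; split_ifs <;> rfl

@[simp] lemma suppress_label (v : ℕ) : (N.suppress v).label = N.label := by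
  unfold suppress; split_ifs <;> rfl

lemma IsSoleParent.filter_eq {p v : ℕ} (h : N.IsSoleParent p v) :
    N.E.filter (fun e => e.2 = v) = {(p, v)} := by
  ext e
  simp only [Finset.mem_filter, Finset.mem_singleton]
  constructor
  · rintro ⟨he, rfl⟩
    exact Prod.ext (h.2 e he rfl) rfl
  · rintro rfl
    exact ⟨h.1, rfl⟩

lemma IsSoleChild.filter_eq {v c : ℕ} (h : N.IsSoleChild v c) :
    N.E.filter (fun e => e.1 = v) = {(v, c)} := by
  ext e
  simp only [Finset.mem_filter, Finset.mem_singleton]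
  constructor
  · rintro ⟨he, rfl⟩
    exact Prod.ext rfl (h.2 e he rfl)
  · rintro rfl
    exact ⟨h.1, rfl⟩

lemma IsSoleParent.theParent_eq {p v : ℕ} (h : N.IsSoleParent p v) : N.theParent v = p := by
  rw [theParent, parents, h.filter_eq, Finset.image_singleton, Finset.min_singleton]
  rfl

lemma IsSink.delEdge {b : ℕ} (h : N.IsSink b) (d : ℕ × ℕ) : (N.delEdge d).IsSink b :=
  fun e he => h e (mem_delEdge_E.mp he).2

lemma IsSink.delLeaf {b : ℕ} (h : N.IsSink b) (t : X) : (N.delLeaf t).IsSink b :=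
  fun e he => h e (mem_delLeaf_E.mp he).1

lemma IsSoleParent.delEdge {p w : ℕ} (h : N.IsSoleParent p w) {d : ℕ × ℕ}
    (hd : (p, w) ≠ d) : (N.delEdge d).IsSoleParent p w :=
  ⟨mem_delEdge_E.mpr ⟨hd, h.1⟩, fun e he => h.2 e (mem_delEdge_E.mp he).2⟩

lemma IsSoleChild.delEdge {w c : ℕ} (h : N.IsSoleChild w c) {d : ℕ × ℕ}
    (hd : (w, c) ≠ d) : (N.delEdge d).IsSoleChild w c :=
  ⟨mem_delEdge_E.mpr ⟨hd, h.1⟩, fun e he => h.2 e (mem_delEdge_E.mp he).2⟩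

lemma IsSoleParent.delLeaf {p w : ℕ} (h : N.IsSoleParent p w) {t : X} (hp : p ≠ N.label t)
    (hw : w ≠ N.label t) : (N.delLeaf t).IsSoleParent p w :=
  ⟨mem_delLeaf_E.mpr ⟨h.1, hp, hw⟩, fun e he => h.2 e (mem_delLeaf_E.mp he).1⟩

namespace IsSuppressible

variable {a v b : ℕ} (hs : N.IsSuppressible a v b)
include hs

lemma suppress_eq : N.suppress v = { N.delVert v with E := insert (a, b) (N.delVert v).E } := by
  have hdeg : N.indeg v = 1 ∧ N.outdeg v = 1 := by
    rw [indeg, outdeg, hs.1.filter_eq, hs.2.filter_eq]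
    exact ⟨rfl, rfl⟩
  rw [suppress, if_pos hdeg, parents, children, hs.1.filter_eq, hs.2.filter_eq]
  simp only [Finset.image_singleton, Finset.singleton_product_singleton, Finset.union_singleton]
  rfl

lemma suppress_V : (N.suppress v).V = N.V.erase v := by
  rw [hs.suppress_eq]; rfl

lemma mem_suppress_E {e : ℕ × ℕ} :
    e ∈ (N.suppress v).E ↔ e = (a, b) ∨ (e ∈ N.E ∧ e.1 ≠ v ∧ e.2 ≠ v) := by
  rw [hs.suppress_eq]
  exact Finset.mem_insert.trans (or_congr_right Finset.mem_filter)

lemma eq_or_eq_or_mem_suppress {e : ℕ × ℕ} (he : e ∈ N.E) :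
    e = (a, v) ∨ e = (v, b) ∨ (e ∈ (N.suppress v).E ∧ e.1 ≠ v ∧ e.2 ≠ v) := by
  by_cases h1 : e.1 = v
  · exact Or.inr (Or.inl (Prod.ext h1 (hs.2.2 e he h1)))
  by_cases h2 : e.2 = v
  · exact Or.inl (Prod.ext (hs.1.2 e he h2) h2)
  exact Or.inr (Or.inr ⟨hs.mem_suppress_E.mpr (Or.inr ⟨he, h1, h2⟩), h1, h2⟩)

lemma ne_of_isSink (hsink : N.IsSink b) : a ≠ v ∧ v ≠ b ∧ a ≠ b := by
  have hvb : v ≠ b := hsink _ hs.2.1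
  exact ⟨fun h => hvb (hs.2.2 _ hs.1.1 h), hvb, hsink _ hs.1.1⟩

lemma isSink_suppress {w : ℕ} (hw : N.IsSink w) (hwa : w ≠ a) : (N.suppress v).IsSink w := by
  intro e he
  rcases hs.mem_suppress_E.mp he with rfl | ⟨he, -⟩
  · exact hwa.symm
  · exact hw e he

lemma isSoleParent_suppress {p w : ℕ} (h : N.IsSoleParent p w) (hp : p ≠ v) (hw : w ≠ v) :
    (N.suppress v).IsSoleParent p w := by
  refine ⟨hs.mem_suppress_E.mpr (Or.inr ⟨h.1, hp, hw⟩), fun e he hew => ?_⟩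
  rcases hs.mem_suppress_E.mp he with rfl | ⟨he, -⟩
  · exact absurd (h.2 _ hs.2.1 hew) hp.symm
  · exact h.2 e he hew

lemma isSoleChild_suppress {w c : ℕ} (h : N.IsSoleChild w c) (hw : w ≠ v) (hc : c ≠ v) :
    (N.suppress v).IsSoleChild w c := by
  refine ⟨hs.mem_suppress_E.mpr (Or.inr ⟨h.1, hw, hc⟩), fun e he hew => ?_⟩
  rcases hs.mem_suppress_E.mp he with rfl | ⟨he, -⟩
  · exact absurd (h.2 _ hs.1.1 hew) hc.symm
  · exact h.2 e he hew

lemma isSoleParent_suppress_self (hb : N.IsSoleParent v b) :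
    (N.suppress v).IsSoleParent a b := by
  refine ⟨hs.mem_suppress_E.mpr (Or.inl rfl), fun e he heb => ?_⟩
  rcases hs.mem_suppress_E.mp he with rfl | ⟨he, hev, -⟩
  · rfl
  · exact absurd (hb.2 e he heb) hev

end IsSuppressible

end Operations

section Degrees

variable {N : Network X}

lemma isSink_of_outdeg_eq_zero {v : ℕ} (h : N.outdeg v = 0) : N.IsSink v := fun e he hev =>
  Finset.notMem_empty e (Finset.card_eq_zero.mp h ▸ Finset.mem_filter.mpr ⟨he, hev⟩)

lemma isSoleParent_of_indeg_eq_one {p v : ℕ} (h : N.indeg v = 1) (hp : (p, v) ∈ N.E) :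
    N.IsSoleParent p v := by
  obtain ⟨e₀, he₀⟩ := Finset.card_eq_one.mp h
  have hmem : ∀ e ∈ N.E, e.2 = v → e = e₀ := fun e he hev =>
    Finset.mem_singleton.mp (he₀ ▸ Finset.mem_filter.mpr ⟨he, hev⟩)
  exact ⟨hp, fun e he hev => by rw [hmem e he hev, ← hmem _ hp rfl]⟩

lemma exists_isSoleParent_of_indeg_eq_one {v : ℕ} (h : N.indeg v = 1) :
    ∃ p, N.IsSoleParent p v := by
  obtain ⟨e₀, he₀⟩ := Finset.card_eq_one.mp h
  have h₀ := Finset.mem_filter.mp (he₀ ▸ Finset.mem_singleton_self e₀)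
  refine ⟨e₀.1, isSoleParent_of_indeg_eq_one h ?_⟩
  rw [← h₀.2]
  exact h₀.1

lemma isSoleChild_of_outdeg_eq_one {v c : ℕ} (h : N.outdeg v = 1) (hc : (v, c) ∈ N.E) :
    N.IsSoleChild v c := by
  obtain ⟨e₀, he₀⟩ := Finset.card_eq_one.mp h
  have hmem : ∀ e ∈ N.E, e.1 = v → e = e₀ := fun e he hev =>
    Finset.mem_singleton.mp (he₀ ▸ Finset.mem_filter.mpr ⟨he, hev⟩)
  exact ⟨hc, fun e he hev => by rw [hmem e he hev, ← hmem _ hc rfl]⟩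

lemma pair_subset_filter_fst {v a b : ℕ} (ha : (v, a) ∈ N.E) (hb : (v, b) ∈ N.E) :
    {(v, a), (v, b)} ⊆ N.E.filter (fun e => e.1 = v) := by
  intro e he
  rcases Finset.mem_insert.mp he with rfl | he
  · exact Finset.mem_filter.mpr ⟨ha, rfl⟩
  · rw [Finset.mem_singleton.mp he]
    exact Finset.mem_filter.mpr ⟨hb, rfl⟩

lemma two_le_outdeg {v a b : ℕ} (ha : (v, a) ∈ N.E) (hb : (v, b) ∈ N.E) (hab : a ≠ b) :
    2 ≤ N.outdeg v := by
  have hcard : ({(v, a), (v, b)} : Finset (ℕ × ℕ)).card = 2 :=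
    Finset.card_pair fun h => hab (congrArg Prod.snd h)
  exact hcard ▸ Finset.card_le_card (pair_subset_filter_fst ha hb)

lemma eq_or_eq_of_outdeg_eq_two {v a b : ℕ} (h : N.outdeg v = 2) (ha : (v, a) ∈ N.E)
    (hb : (v, b) ∈ N.E) (hab : a ≠ b) : ∀ e ∈ N.E, e.1 = v → e.2 = a ∨ e.2 = b := by
  have hcard : ({(v, a), (v, b)} : Finset (ℕ × ℕ)).card = 2 :=
    Finset.card_pair fun h => hab (congrArg Prod.snd h)
  have hset := Finset.eq_of_subset_of_card_le (pair_subset_filter_fst ha hb)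
    (by rw [hcard]; exact h.le)
  intro e he hev
  have : e ∈ ({(v, a), (v, b)} : Finset (ℕ × ℕ)) :=
    hset ▸ Finset.mem_filter.mpr ⟨he, hev⟩
  rcases Finset.mem_insert.mp this with rfl | h
  · exact Or.inl rfl
  · rw [Finset.mem_singleton.mp h]
    exact Or.inr rfl

lemma exists_other_parent_of_indeg_eq_two {p v : ℕ} (h : N.indeg v = 2) (hp : (p, v) ∈ N.E) :
    ∃ z, z ≠ p ∧ (z, v) ∈ N.E ∧ ∀ e ∈ N.E, e.2 = v → e.1 = p ∨ e.1 = z := by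
  have hpf : (p, v) ∈ N.E.filter (fun e => e.2 = v) := Finset.mem_filter.mpr ⟨hp, rfl⟩
  obtain ⟨e₀, he₀⟩ := Finset.card_eq_one.mp
    (by rw [Finset.card_erase_of_mem hpf]; exact congrArg (· - 1) h)
  obtain ⟨hne, hmem⟩ := Finset.mem_erase.mp (he₀ ▸ Finset.mem_singleton_self e₀)
  obtain ⟨he₀E, he₀v⟩ := Finset.mem_filter.mp hmem
  refine ⟨e₀.1, fun hz => hne (Prod.ext hz he₀v), he₀v ▸ he₀E, fun e he hev => ?_⟩
  by_cases hep : e = (p, v)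
  · exact Or.inl (congrArg Prod.fst hep)
  · have : e ∈ (N.E.filter (fun e => e.2 = v)).erase (p, v) :=
      Finset.mem_erase.mpr ⟨hep, Finset.mem_filter.mpr ⟨he, hev⟩⟩
    rw [he₀, Finset.mem_singleton] at this
    exact Or.inr (congrArg Prod.fst this)

end Degrees

namespace IsPhylo

variable {N : Network X} (hN : N.IsPhylo)
include hN

lemma mem_V_of_mem_E {e : ℕ × ℕ} (he : e ∈ N.E) : e.1 ∈ N.V ∧ e.2 ∈ N.V :=
  hN.2.2.2.1 e he

lemma label_mem_V {t : X} (ht : t ∈ N.taxa) : N.label t ∈ N.V :=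
  (hN.2.2.2.2.2.1 t ht).1

lemma label_ne {s t : X} (hs : s ∈ N.taxa) (ht : t ∈ N.taxa) (hst : s ≠ t) :
    N.label s ≠ N.label t :=
  fun h => hst (hN.2.2.2.2.1 hs ht h)

lemma isSink_label {t : X} (ht : t ∈ N.taxa) : N.IsSink (N.label t) :=
  isSink_of_outdeg_eq_zero (hN.2.2.2.2.2.1 t ht).2.2

lemma isSoleParent_label {t : X} (ht : t ∈ N.taxa) {p : ℕ} (hp : (p, N.label t) ∈ N.E) :
    N.IsSoleParent p (N.label t) :=
  isSoleParent_of_indeg_eq_one (hN.2.2.2.2.2.1 t ht).2.1 hp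

lemma label_ne_of_mem_E {t : X} (ht : t ∈ N.taxa) {e : ℕ × ℕ} (he : e ∈ N.E) :
    N.label t ≠ e.1 :=
  fun h => hN.isSink_label ht e he h.symm

lemma ne_of_mem_E {u v : ℕ} (h : (u, v) ∈ N.E) : u ≠ v := by
  rintro rfl
  exact hN.2.2.2.2.2.2.2.2 u (Relation.TransGen.single h)

lemma isTreeNode_of_two_le_outdeg {v : ℕ} (hv : v ∈ N.V) (h : 2 ≤ N.outdeg v) :
    N.IsTreeNode v := by
  rcases hN.2.2.2.2.2.2.2.1 v hv with rfl | hl | ht | hr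
  · rw [hN.2.2.1] at h; omega
  · rw [hl.2] at h; omega
  · exact ht
  · rw [hr.2] at h; omega

lemma exists_label_or_child {v : ℕ} (hv : v ∈ N.V) :
    (∃ t ∈ N.taxa, N.label t = v) ∨ ∃ w, (v, w) ∈ N.E := by
  by_cases hleaf : N.IsLeafNode v
  · exact Or.inl (hN.2.2.2.2.2.2.1 v hv hleaf)
  right
  have hpos : N.outdeg v ≠ 0 := by
    rcases hN.2.2.2.2.2.2.2.1 v hv with rfl | hl | ht | hr
    · rw [hN.2.2.1]; exact one_ne_zero
    · exact absurd hl hleaf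
    · exact (Nat.lt_of_lt_of_le two_pos ht.2).ne'
    · rw [hr.2]; exact one_ne_zero
  obtain ⟨e, he⟩ := Finset.card_ne_zero.mp hpos
  obtain ⟨heE, rfl⟩ := Finset.mem_filter.mp he
  exact ⟨e.2, heE⟩

end IsPhylo

namespace IsEmbedding

variable {M' M : Network X} {f : ℕ → ℕ} {g : ℕ × ℕ → List ℕ}

lemma apply_ne_of_isSink (hemb : IsEmbedding M' M f g) {u w s : ℕ} (he : (u, w) ∈ M'.E)
    (hu : u ∈ M'.V) (hw : w ∈ M'.V) (huw : u ≠ w) (hs : M.IsSink s) : f u ≠ s := by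
  obtain ⟨hpath, hhead, hlast⟩ := hemb.2.2.2.1 _ he
  dsimp only at hhead hlast
  obtain ⟨L, x, hl⟩ := exists_eq_append_pair hhead hlast fun h => huw (hemb.2.1 hu hw h)
  rw [hl, show L ++ [x, f w] = L ++ [x] ++ [f w] by simp] at hpath
  have hmem : f u ∈ L ++ [x] := by
    rw [hl] at hhead
    cases L <;> simp_all
  exact fun h => hpath.not_mem_of_isSink hs (h ▸ hmem)

lemma mono {K : Network X} (hemb : IsEmbedding M' M f g) (hV : M.V ⊆ K.V)
    (hlab : M.label = K.label) (hE : ∀ e ∈ M'.E, ∀ q ∈ pathEdges (g e), q ∈ K.E) :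
    IsEmbedding M' K f g := by
  obtain ⟨hMV, hinj, hflab, hpath, hdisj⟩ := hemb
  refine ⟨fun v hv => hV (hMV v hv), hinj, hlab ▸ hflab, fun e he => ?_, hdisj⟩
  exact ⟨isDipath_iff.mpr (hE e he), (hpath e he).2⟩

theorem of_delEdge {N' N : Network X} {u' v' u v : ℕ}
    (hemb : IsEmbedding (N'.delEdge (u', v')) (N.delEdge (u, v)) f g)
    (huv : (u, v) ∈ N.E) (hu : f u' = u) (hv : f v' = v) :
    IsEmbedding N' N f (Function.update g (u', v') [u, v]) := by
  obtain ⟨hV, hinj, hlab, hpath, hdisj⟩ := hemb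
  obtain ⟨o, ho⟩ := pathsDisjoint_iff_exists_owner.mp hdisj
  refine isEmbedding_of_owner (fun q => if q = (u, v) then (u', v') else o q) hV hinj hlab
    fun e he => ?_
  by_cases hd : e = (u', v')
  · subst hd
    simp_all [pathEdges]
  · have he' := mem_delEdge_E.mpr ⟨hd, he⟩
    rw [Function.update_of_ne hd]
    refine ⟨fun q hq => ?_, (hpath e he').2⟩
    obtain ⟨hne, hqN⟩ := mem_delEdge_E.mp (isDipath_iff.mp (hpath e he').1 q hq)
    exact ⟨hqN, by simp only [if_neg hne, ho e he' q hq]⟩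

section Suppress

variable {K' K : Network X} {a' v' b' a v b : ℕ}
  (hemb : IsEmbedding (K'.suppress v') (K.suppress v) f g)
  (hs' : K'.IsSuppressible a' v' b') (hs : K.IsSuppressible a v b)
include hemb hs' hs

/-- As `b` is a sink entered only from `v`, the merged host edge `a → b` can only be the last
edge of the path of the merged guest edge `a' → b'`. -/
lemma exists_route_of_suppress (ha' : a' ∈ K'.V) (hb' : b' ∈ K'.V) (hsink' : K'.IsSink b')
    (hsink : K.IsSink b) (hpar : K.IsSoleParent v b) (hfb : f b' = b) :
    ∃ L, g (a', b') = L ++ [a, b] ∧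
      (∀ q ∈ pathEdges (L ++ [a]), q ∈ K.E ∧ q.1 ≠ v ∧ q.2 ≠ v) ∧
      ∀ e ∈ (K'.suppress v').E, e ≠ (a', b') →
        ∀ q ∈ pathEdges (g e), q ∈ K.E ∧ q.1 ≠ v ∧ q.2 ≠ v := by
  have hmerged : (a', b') ∈ (K'.suppress v').E := hs'.mem_suppress_E.mpr (Or.inl rfl)
  obtain ⟨ha'v', hv'b', ha'b'⟩ := hs'.ne_of_isSink hsink'
  obtain ⟨hl, hlh, hll⟩ := hemb.2.2.2.1 _ hmerged
  dsimp only at hlh hll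
  have hinj := hemb.2.1
  rw [hs'.suppress_V] at hinj
  obtain ⟨L, w, hLw⟩ := exists_eq_append_pair hlh hll fun h => ha'b' (hinj
    (Finset.mem_erase.mpr ⟨ha'v', ha'⟩) (Finset.mem_erase.mpr ⟨hv'b'.symm, hb'⟩) h)
  rw [hfb] at hLw
  rw [hLw] at hl
  have hedges := isDipath_iff.mp hl
  rw [pathEdges_append_pair] at hedges
  obtain rfl : w = a := (hs.isSoleParent_suppress_self hpar).2 _ (hedges (w, b) (by simp)) rfl
  have hbL : b ∉ L ++ [w] := IsDipath.not_mem_of_isSink (u := b) (by simpa using hl)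
    (hs.isSink_suppress hsink (hs.ne_of_isSink hsink).2.2.symm)
  refine ⟨L, hLw, fun q hq => ?_, fun e he hne q hq => ?_⟩
  · refine (hs.mem_suppress_E.mp (hedges q (List.mem_append_left _ hq))).resolve_left ?_
    rintro rfl
    exact hbL (mem_of_mem_pathEdges hq).2
  · refine (hs.mem_suppress_E.mp (isDipath_iff.mp (hemb.2.2.2.1 e he).1 q hq)).resolve_left ?_
    rintro rfl
    exact hemb.2.2.2.2 _ hmerged e he (Ne.symm hne) (w, b)
      (by rw [hLw, pathEdges_append_pair]; simp) hq

theorem of_suppress (ha' : a' ∈ K'.V) (hb' : b' ∈ K'.V) (hv : v ∈ K.V)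
    (hnew : (a', b') ∉ K'.E) (hsink' : K'.IsSink b') (hsink : K.IsSink b)
    (hpar : K.IsSoleParent v b) (hlab : ∀ t ∈ K'.taxa, K'.label t ≠ v') (hfb : f b' = b) :
    ∃ G, IsEmbedding K' K (Function.update f v' v) G := by
  obtain ⟨L, hL, hLK, hold⟩ :=
    hemb.exists_route_of_suppress hs' hs ha' hb' hsink' hsink hpar hfb
  obtain ⟨hV, hinj, hflab, hpath, hdisj⟩ := hemb
  obtain ⟨o, ho⟩ := pathsDisjoint_iff_exists_owner.mp hdisj
  rw [hs'.suppress_V] at hV hinj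
  rw [hs.suppress_V] at hV
  obtain ⟨ha'v', hv'b', -⟩ := hs'.ne_of_isSink hsink'
  obtain ⟨-, hvb, -⟩ := hs.ne_of_isSink hsink
  have hmerged : (a', b') ∈ (K'.suppress v').E := hs'.mem_suppress_E.mpr (Or.inl rfl)
  have hLo : ∀ q ∈ pathEdges (L ++ [a]), o q = (a', b') := fun q hq =>
    ho _ hmerged q (by rw [hL, pathEdges_append_pair]; exact List.mem_append_left _ hq)
  have hne : (v', b') ≠ (a', v') := fun h => ha'v' (congrArg Prod.fst h).symm
  -- the host edges at `v` belong to the two halves of the merged guest edge, the rest of its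
  -- path to the first half
  refine ⟨Function.update (Function.update g (v', b') [v, b]) (a', v') (L ++ [a, v]),
    isEmbedding_of_owner (fun q => if q.2 = v then (a', v') else if q.1 = v then (v', b')
      else if o q = (a', b') then (a', v') else o q) (fun u hu => ?_)
    (injOn_update hinj fun u hu => Finset.ne_of_mem_erase (hV u hu)) (fun t ht => ?_)
    fun e he => ?_⟩
  · by_cases huv : u = v'
    · rw [huv, Function.update_self]; exact hv
    · rw [Function.update_of_ne huv]
      exact Finset.mem_of_mem_erase (hV u (Finset.mem_erase.mpr ⟨huv, hu⟩))
  · rw [Function.update_of_ne (hlab t ht)]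
    simpa using hflab t (by simpa using ht)
  rcases hs'.eq_or_eq_or_mem_suppress he with rfl | rfl | ⟨he', h1, h2⟩
  · simp only [Function.update_self, Function.update_of_ne ha'v']
    have hhead : (L ++ [a, v]).head? = some (f a') := by
      rw [head?_append_pair L a v b, ← hL]; exact (hpath _ hmerged).2.1
    refine ⟨fun q hq => ?_, hhead, by simp⟩
    rw [pathEdges_append_pair, List.mem_append, List.mem_singleton] at hq
    rcases hq with hq | rfl
    · obtain ⟨hqK, hq1, hq2⟩ := hLK q hq
      exact ⟨hqK, by simp only [if_neg hq1, if_neg hq2, if_pos (hLo q hq)]⟩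
    · exact ⟨hs.1.1, by simp⟩
  · simp only [Function.update_of_ne hne, Function.update_self,
      Function.update_of_ne hv'b'.symm, hfb]
    refine ⟨fun q hq => ?_, rfl, rfl⟩
    obtain rfl : q = (v, b) := by simpa [pathEdges] using hq
    exact ⟨hs.2.1, by simp [hvb.symm]⟩
  · have hne' : e ≠ (a', b') := fun h => hnew (h ▸ he)
    rw [Function.update_of_ne fun h => h2 (congrArg Prod.snd h),
      Function.update_of_ne fun h => h1 (congrArg Prod.fst h),
      Function.update_of_ne h1, Function.update_of_ne h2]
    refine ⟨fun q hq => ?_, (hpath e he').2⟩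
    obtain ⟨hqK, hq1, hq2⟩ := hold e he' hne' q hq
    exact ⟨hqK, by simp only [if_neg hq1, if_neg hq2, ho e he' q hq, if_neg hne']⟩

end Suppress

theorem of_delLeaf {N' K N : Network X} {t : X} {p' : ℕ} {π : List ℕ}
    (hemb : IsEmbedding (N'.delLeaf t) K f g) (hN' : N'.IsPhylo) (ht : t ∈ N'.taxa)
    (hp' : (p', N'.label t) ∈ N'.E) (hKV : K.V ⊆ N.V) (hKE : K.E ⊆ N.E)
    (hKlab : K.label = N.label) (htV : N.label t ∈ N.V) (hπ : N.IsDipath π)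
    (hπh : π.head? = some (f p')) (hπl : π.getLast? = some (N.label t))
    (hft : ∀ v ∈ (N'.delLeaf t).V, f v ≠ N.label t)
    (hπfree : ∀ e ∈ (N'.delLeaf t).E, ∀ q ∈ pathEdges π, q ∉ pathEdges (g e)) :
    ∃ G, IsEmbedding N' N (Function.update f (N'.label t) (N.label t)) G := by
  obtain ⟨hV, hinj, hlab, hpath, hdisj⟩ := hemb
  obtain ⟨o, ho⟩ := pathsDisjoint_iff_exists_owner.mp hdisj
  have hsink := hN'.isSink_label ht
  have hold : ∀ e ∈ N'.E, e ≠ (p', N'.label t) →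
      e ∈ (N'.delLeaf t).E ∧ e.1 ≠ N'.label t ∧ e.2 ≠ N'.label t := by
    intro e he hne
    have h2 : e.2 ≠ N'.label t :=
      fun h => hne (Prod.ext ((hN'.isSoleParent_label ht hp').2 e he h) h)
    exact ⟨mem_delLeaf_E.mpr ⟨he, hsink e he, h2⟩, hsink e he, h2⟩
  refine ⟨Function.update g (p', N'.label t) π,
    isEmbedding_of_owner (fun q => if q ∈ pathEdges π then (p', N'.label t) else o q)
      (fun u hu => ?_) (injOn_update hinj hft) (fun s hs => ?_) fun e he => ?_⟩
  · by_cases hut : u = N'.label t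
    · rw [hut, Function.update_self]; exact htV
    · rw [Function.update_of_ne hut]; exact hKV (hV u (Finset.mem_erase.mpr ⟨hut, hu⟩))
  · by_cases hst : s = t
    · rw [hst, Function.update_self]
    · rw [Function.update_of_ne (hN'.label_ne hs ht hst), ← hKlab]
      exact hlab s (Finset.mem_erase.mpr ⟨hst, hs⟩)
  by_cases hd : e = (p', N'.label t)
  · subst hd
    simp only [Function.update_self, Function.update_of_ne (hsink _ hp')]
    exact ⟨fun q hq => ⟨isDipath_iff.mp hπ q hq, if_pos hq⟩, hπh, hπl⟩
  · obtain ⟨he', h1, h2⟩ := hold e he hd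
    rw [Function.update_of_ne hd, Function.update_of_ne h1, Function.update_of_ne h2]
    refine ⟨fun q hq => ⟨hKE (isDipath_iff.mp (hpath e he').1 q hq), ?_⟩, (hpath e he').2⟩
    simp only [if_neg fun h => hπfree e he' q h hq, ho e he' q hq]

end IsEmbedding

section Shapes

variable {N : Network X} {x y : X}

structure IsCherryShape (N : Network X) (x y : X) (p gp : ℕ) : Prop where
  isCherry : N.IsCherry x y
  parent_x : N.IsSoleParent p (N.label x)
  parent_y : N.IsSoleParent p (N.label y)
  parent_p : N.IsSoleParent gp p
  child_p : ∀ e ∈ N.E, e.1 = p → e.2 = N.label x ∨ e.2 = N.label y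

structure IsRetCherryShape (N : Network X) (x y : X) (px py z gpy : ℕ) : Prop where
  isRetCherry : N.IsRetCherry x y
  parent_x : N.IsSoleParent px (N.label x)
  parent_y : N.IsSoleParent py (N.label y)
  parent_py : N.IsSoleParent gpy py
  edge_py_px : (py, px) ∈ N.E
  edge_z_px : (z, px) ∈ N.E
  z_ne : z ≠ py
  parent_px : ∀ e ∈ N.E, e.2 = px → e.1 = py ∨ e.1 = z
  child_px : N.IsSoleChild px (N.label x)
  child_py : ∀ e ∈ N.E, e.1 = py → e.2 = N.label y ∨ e.2 = px

lemma IsCherry.exists_shape (hN : N.IsPhylo) (hb : N.IsBinary) (h : N.IsCherry x y) :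
    ∃ p gp, N.IsCherryShape x y p gp := by
  obtain ⟨hx, hy, hxy, p, hpx, hpy⟩ := h
  have hlxy := hN.label_ne hx hy hxy
  have hpV := (hN.mem_V_of_mem_E hpx).1
  have htree := hN.isTreeNode_of_two_le_outdeg hpV (two_le_outdeg hpx hpy hlxy)
  obtain ⟨gp, hgp⟩ := exists_isSoleParent_of_indeg_eq_one htree.1
  exact ⟨p, gp, ⟨hx, hy, hxy, p, hpx, hpy⟩, hN.isSoleParent_label hx hpx,
    hN.isSoleParent_label hy hpy, hgp, eq_or_eq_of_outdeg_eq_two (hb.1 p hpV htree) hpx hpy hlxy⟩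

lemma IsRetCherry.exists_shape (hN : N.IsPhylo) (hb : N.IsBinary) (h : N.IsRetCherry x y) :
    ∃ px py z gpy, N.IsRetCherryShape x y px py z gpy := by
  obtain ⟨hx, hy, hxy, px, py, hpx, hpy, hret, htree, hpypx⟩ := h
  obtain ⟨z, hz, hzpx, hparpx⟩ :=
    exists_other_parent_of_indeg_eq_two (hb.2 px (hN.mem_V_of_mem_E hpx).1 hret) hpypx
  obtain ⟨gpy, hgpy⟩ := exists_isSoleParent_of_indeg_eq_one htree.1
  exact ⟨px, py, z, gpy, ⟨hx, hy, hxy, px, py, hpx, hpy, hret, htree, hpypx⟩,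
    hN.isSoleParent_label hx hpx, hN.isSoleParent_label hy hpy, hgpy, hpypx, hzpx, hz, hparpx,
    isSoleChild_of_outdeg_eq_one hret.2 hpx, eq_or_eq_of_outdeg_eq_two
      (hb.1 py (hN.mem_V_of_mem_E hpy).1 htree) hpy hpypx (hN.label_ne_of_mem_E hy hpx)⟩

namespace IsCherryShape

variable {p gp : ℕ} (h : N.IsCherryShape x y p gp)
include h

lemma reducePair_eq : N.reducePair (x, y) = (N.delLeaf x).suppress p := by
  unfold reducePair
  rw [if_pos h.isCherry, h.parent_x.theParent_eq]
  rfl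

variable (hN : N.IsPhylo)
include hN

lemma isSuppressible : (N.delLeaf x).IsSuppressible gp p (N.label y) := by
  obtain ⟨hx, hy, hxy, -⟩ := h.isCherry
  have hpx : p ≠ N.label x := (hN.label_ne_of_mem_E hx h.parent_x.1).symm
  refine ⟨h.parent_p.delLeaf (hN.label_ne_of_mem_E hx h.parent_p.1).symm hpx,
    mem_delLeaf_E.mpr ⟨h.parent_y.1, hpx, hN.label_ne hy hx hxy.symm⟩, fun e he he1 => ?_⟩
  obtain ⟨he, -, hex⟩ := mem_delLeaf_E.mp he
  exact (h.child_p e he he1).resolve_left hex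

lemma not_mem_delLeaf_E : (gp, N.label y) ∉ (N.delLeaf x).E := fun hE =>
  hN.ne_of_mem_E h.parent_p.1 (h.parent_y.2 _ (mem_delLeaf_E.mp hE).1 rfl)

lemma mem_V_of_mem_reducePair_E {e : ℕ × ℕ} (he : e ∈ (N.reducePair (x, y)).E) :
    e.1 ∈ (N.reducePair (x, y)).V ∧ e.2 ∈ (N.reducePair (x, y)).V := by
  obtain ⟨hx, hy, hxy, -⟩ := h.isCherry
  have hs := h.isSuppressible hN
  rw [h.reducePair_eq, hs.suppress_V, delLeaf_V]
  rw [h.reducePair_eq, hs.mem_suppress_E] at he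
  rcases he with rfl | ⟨he, hp1, hp2⟩
  · exact ⟨Finset.mem_erase.mpr ⟨hN.ne_of_mem_E h.parent_p.1, Finset.mem_erase.mpr
        ⟨(hN.label_ne_of_mem_E hx h.parent_p.1).symm, (hN.mem_V_of_mem_E h.parent_p.1).1⟩⟩,
      Finset.mem_erase.mpr ⟨(hN.ne_of_mem_E h.parent_y.1).symm, Finset.mem_erase.mpr
        ⟨hN.label_ne hy hx hxy.symm, hN.label_mem_V hy⟩⟩⟩
  · obtain ⟨he, hx1, hx2⟩ := mem_delLeaf_E.mp he
    have hV := hN.mem_V_of_mem_E he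
    exact ⟨Finset.mem_erase.mpr ⟨hp1, Finset.mem_erase.mpr ⟨hx1, hV.1⟩⟩,
      Finset.mem_erase.mpr ⟨hp2, Finset.mem_erase.mpr ⟨hx2, hV.2⟩⟩⟩

lemma exists_label_or_child_reducePair {u : ℕ} (hu : u ∈ (N.reducePair (x, y)).V) :
    (∃ t ∈ N.taxa, t ≠ x ∧ N.label t = u) ∨
      ∃ w, u ≠ w ∧ (u, w) ∈ (N.reducePair (x, y)).E := by
  have hs := h.isSuppressible hN
  have hu' := hu
  rw [h.reducePair_eq, hs.suppress_V, delLeaf_V] at hu'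
  obtain ⟨hup, hux, huV⟩ := Finset.mem_erase.mp hu' |>.imp_right Finset.mem_erase.mp
  rcases hN.exists_label_or_child huV with ⟨t, ht, rfl⟩ | ⟨w, hw⟩
  · exact Or.inl ⟨t, ht, fun htx => hux (htx ▸ rfl), rfl⟩
  right
  simp only [h.reducePair_eq, hs.mem_suppress_E]
  by_cases hwp : w = p
  · subst hwp
    obtain rfl := h.parent_p.2 _ hw rfl
    exact ⟨N.label y, fun hy => hN.label_ne_of_mem_E h.isCherry.2.1 h.parent_p.1 hy.symm,
      Or.inl rfl⟩
  · have hwx : w ≠ N.label x := fun hwx => hup (h.parent_x.2 _ hw hwx)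
    exact ⟨w, hN.ne_of_mem_E hw, Or.inr ⟨mem_delLeaf_E.mpr ⟨hw, hux, hwx⟩, hup, hwp⟩⟩

/-- Every vertex of the reduced network is a leaf other than `x` or has an out-edge, and a
vertex with an out-edge cannot be sent to a sink. -/
lemma apply_ne_of_isSink {M : Network X} {f : ℕ → ℕ} {g : ℕ × ℕ → List ℕ}
    (hemb : IsEmbedding (N.reducePair (x, y)) M f g) {s : ℕ} (hs : M.IsSink s)
    (hlab : ∀ t ∈ N.taxa, t ≠ x → M.label t ≠ s) :
    ∀ u ∈ (N.reducePair (x, y)).V, f u ≠ s := by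
  intro u hu
  rcases h.exists_label_or_child_reducePair hN hu with ⟨t, ht, htx, rfl⟩ | ⟨w, huw, he⟩
  · have := hemb.2.2.1 t (by rw [h.reducePair_eq]; simpa using ⟨htx, ht⟩)
    rw [h.reducePair_eq, suppress_label, delLeaf_label] at this
    rw [this]
    exact hlab t ht htx
  · exact hemb.apply_ne_of_isSink he hu (h.mem_V_of_mem_reducePair_E hN he).2 huw hs

lemma exists_isEmbedding_delLeaf {K : Network X} {a v b : ℕ} {f : ℕ → ℕ}
    {g : ℕ × ℕ → List ℕ} (hemb : IsEmbedding ((N.delLeaf x).suppress p) (K.suppress v) f g)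
    (hs : K.IsSuppressible a v b) (hv : v ∈ K.V) (hsink : K.IsSink b)
    (hpar : K.IsSoleParent v b) (hfy : f (N.label y) = b) :
    ∃ G, IsEmbedding (N.delLeaf x) K (Function.update f p v) G := by
  obtain ⟨hx, hy, hxy, -⟩ := h.isCherry
  exact hemb.of_suppress (h.isSuppressible hN) hs
    (Finset.mem_erase.mpr ⟨(hN.label_ne_of_mem_E hx h.parent_p.1).symm,
      (hN.mem_V_of_mem_E h.parent_p.1).1⟩)
    (Finset.mem_erase.mpr ⟨hN.label_ne hy hx hxy.symm, hN.label_mem_V hy⟩)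
    hv (h.not_mem_delLeaf_E hN) ((hN.isSink_label hy).delLeaf x) hsink hpar
    (fun t ht => hN.label_ne_of_mem_E (Finset.mem_of_mem_erase ht) h.parent_y.1) hfy

end IsCherryShape

namespace IsRetCherryShape

variable {px py z gpy : ℕ} (h : N.IsRetCherryShape x y px py z gpy) (hN : N.IsPhylo)
include h hN

lemma px_ne_py : px ≠ py := (hN.ne_of_mem_E h.edge_py_px).symm

lemma not_isCherry : ¬ N.IsCherry x y := fun ⟨_, _, _, q, hqx, hqy⟩ =>
  h.px_ne_py hN ((h.parent_x.2 (q, N.label x) hqx rfl).symm.trans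
    (h.parent_y.2 (q, N.label y) hqy rfl))

lemma reducePair_eq :
    N.reducePair (x, y) = ((N.delEdge (py, px)).suppress py).suppress px := by
  unfold reducePair
  rw [if_neg (h.not_isCherry hN), if_pos h.isRetCherry, h.parent_y.theParent_eq,
    h.parent_x.theParent_eq]

lemma isSuppressible_py : (N.delEdge (py, px)).IsSuppressible gpy py (N.label y) := by
  have hypx : N.label y ≠ px := hN.label_ne_of_mem_E h.isRetCherry.2.1 h.child_px.1
  refine ⟨h.parent_py.delEdge fun hd => hN.ne_of_mem_E h.parent_py.1 (congrArg Prod.fst hd),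
    mem_delEdge_E.mpr ⟨fun hd => hypx (congrArg Prod.snd hd), h.parent_y.1⟩,
    fun e he he1 => ?_⟩
  obtain ⟨hne, he⟩ := mem_delEdge_E.mp he
  exact (h.child_py e he he1).resolve_right fun he2 => hne (Prod.ext he1 he2)

lemma isSuppressible_px :
    ((N.delEdge (py, px)).suppress py).IsSuppressible z px (N.label x) := by
  have hpxpy := h.px_ne_py hN
  have hxpy : N.label x ≠ py := hN.label_ne_of_mem_E h.isRetCherry.1 h.parent_y.1
  have hz : (N.delEdge (py, px)).IsSoleParent z px := by
    refine ⟨mem_delEdge_E.mpr ⟨fun hd => h.z_ne (congrArg Prod.fst hd), h.edge_z_px⟩,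
      fun e he he2 => ?_⟩
    obtain ⟨hne, he⟩ := mem_delEdge_E.mp he
    exact (h.parent_px e he he2).resolve_left fun he1 => hne (Prod.ext he1 he2)
  exact ⟨(h.isSuppressible_py hN).isSoleParent_suppress hz h.z_ne hpxpy,
    (h.isSuppressible_py hN).isSoleChild_suppress
      (h.child_px.delEdge fun hd => hpxpy (congrArg Prod.fst hd)) hpxpy hxpy⟩

lemma not_mem_delEdge_E : (gpy, N.label y) ∉ (N.delEdge (py, px)).E := fun hE =>
  hN.ne_of_mem_E h.parent_py.1 (h.parent_y.2 _ (mem_delEdge_E.mp hE).2 rfl)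

lemma not_mem_suppress_E : (z, N.label x) ∉ ((N.delEdge (py, px)).suppress py).E := by
  intro hE
  obtain ⟨hx, hy, hxy, -⟩ := h.isRetCherry
  rcases (h.isSuppressible_py hN).mem_suppress_E.mp hE with hd | ⟨hE, -⟩
  · exact hN.label_ne hx hy hxy (congrArg Prod.snd hd)
  · exact hN.ne_of_mem_E h.edge_z_px (h.parent_x.2 _ (mem_delEdge_E.mp hE).2 rfl)

lemma isSink_suppress : ((N.delEdge (py, px)).suppress py).IsSink (N.label x) :=
  (h.isSuppressible_py hN).isSink_suppress ((hN.isSink_label h.isRetCherry.1).delEdge _)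
    (hN.label_ne_of_mem_E h.isRetCherry.1 h.parent_py.1)

lemma isSoleParent_suppress :
    ((N.delEdge (py, px)).suppress py).IsSoleParent px (N.label x) :=
  (h.isSuppressible_py hN).isSoleParent_suppress
    (h.parent_x.delEdge fun hd => h.px_ne_py hN (congrArg Prod.fst hd)) (h.px_ne_py hN)
    (hN.label_ne_of_mem_E h.isRetCherry.1 h.parent_y.1)

lemma isSink_reducePair : (N.reducePair (x, y)).IsSink (N.label x) := by
  rw [h.reducePair_eq hN]
  exact (h.isSuppressible_px hN).isSink_suppress (h.isSink_suppress hN)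
    (hN.label_ne_of_mem_E h.isRetCherry.1 h.edge_z_px)

lemma isEmbedding_suppress_of_avoids {M' : Network X} {f : ℕ → ℕ}
    {g : ℕ × ℕ → List ℕ} (hemb : IsEmbedding M' (N.reducePair (x, y)) f g)
    (havoid : ∀ e ∈ M'.E, f e.2 ≠ N.label x) :
    IsEmbedding M' ((N.delEdge (py, px)).suppress py) f g := by
  have hs := h.isSuppressible_px hN
  have hsink := h.isSink_reducePair hN
  rw [h.reducePair_eq hN] at hemb hsink
  refine hemb.mono (by rw [hs.suppress_V]; exact Finset.erase_subset _ _) (by simp)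
    fun e he q hq => ?_
  obtain ⟨hl, -, hlast⟩ := hemb.2.2.2.1 e he
  rcases hs.mem_suppress_E.mp (isDipath_iff.mp hl q hq) with rfl | hq'
  · have := hl.getLast?_eq_of_isSink hsink hq
    rw [hlast] at this
    exact absurd (Option.some.inj this) (havoid e he)
  · exact hq'.1

/-- `py → px` is deleted, and a path through `px → x` ends at the leaf `x`. -/
lemma not_mem_pathEdges_of_avoids {M' : Network X} {f : ℕ → ℕ} {g : ℕ × ℕ → List ℕ}
    (hemb : IsEmbedding M' (N.delEdge (py, px)) f g)
    (havoid : ∀ e ∈ M'.E, f e.2 ≠ N.label x) :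
    ∀ e ∈ M'.E, ∀ q ∈ pathEdges [py, px, N.label x], q ∉ pathEdges (g e) := by
  intro e he q hq hq'
  obtain ⟨hl, -, hlast⟩ := hemb.2.2.2.1 e he
  simp only [pathEdges, List.tail_cons, List.zip_cons_cons, List.zip_nil_right,
    List.mem_cons, List.not_mem_nil, or_false] at hq
  rcases hq with rfl | rfl
  · exact (mem_delEdge_E.mp (isDipath_iff.mp hl _ hq')).1 rfl
  · have := hl.getLast?_eq_of_isSink ((hN.isSink_label h.isRetCherry.1).delEdge _) hq'
    rw [hlast] at this
    exact havoid e he (Option.some.inj this)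

end IsRetCherryShape

end Shapes

section Lifting

variable {N' N : Network X} {x y : X} {f : ℕ → ℕ} {g : ℕ × ℕ → List ℕ}
  (hN' : N'.IsPhylo) (hN : N.IsPhylo)
include hN' hN

theorem IsCherryShape.isSubnetwork_of_isCherryShape {p' gp' p gp : ℕ}
    (h' : N'.IsCherryShape x y p' gp') (h : N.IsCherryShape x y p gp)
    (hemb : IsEmbedding (N'.reducePair (x, y)) (N.reducePair (x, y)) f g) :
    IsSubnetwork N' N := by
  obtain ⟨hx', hy', hxy, -⟩ := h'.isCherry
  obtain ⟨hx, hy, -, -⟩ := h.isCherry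
  rw [h'.reducePair_eq, h.reducePair_eq] at hemb
  have hpx : p ≠ N.label x := (hN.label_ne_of_mem_E hx h.parent_x.1).symm
  obtain ⟨G, hG⟩ := h'.exists_isEmbedding_delLeaf hN' hemb (h.isSuppressible hN)
    (Finset.mem_erase.mpr ⟨hpx, (hN.mem_V_of_mem_E h.parent_x.1).1⟩)
    ((hN.isSink_label hy).delLeaf x) (h.parent_y.delLeaf hpx (hN.label_ne hy hx hxy.symm))
    (by simpa using hemb.2.2.1 y (by simpa using ⟨hxy.symm, hy'⟩))
  have hfree : ∀ e ∈ (N'.delLeaf x).E, ∀ q ∈ pathEdges [p, N.label x],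
      q ∉ pathEdges (G e) := by
    intro e he q hq hq'
    obtain rfl : q = (p, N.label x) := by simpa [pathEdges] using hq
    exact (mem_delLeaf_E.mp (isDipath_iff.mp (hG.2.2.2.1 e he).1 _ hq')).2.2 rfl
  obtain ⟨G', hG'⟩ := hG.of_delLeaf hN' hx' h'.parent_x.1 (Finset.erase_subset _ _)
    (Finset.filter_subset _ _) rfl (hN.label_mem_V hx) (isDipath_pair.mpr h.parent_x.1)
    (by simp) (by simp) (fun u hu => Finset.ne_of_mem_erase (hG.1 u hu)) hfree
  exact ⟨_, _, hG'⟩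

theorem IsRetCherryShape.isSubnetwork_of_isRetCherryShape {px' py' z' gpy' px py z gpy : ℕ}
    (h' : N'.IsRetCherryShape x y px' py' z' gpy') (h : N.IsRetCherryShape x y px py z gpy)
    (hemb : IsEmbedding (N'.reducePair (x, y)) (N.reducePair (x, y)) f g) :
    IsSubnetwork N' N := by
  obtain ⟨hx', hy', -⟩ := h'.isRetCherry
  rw [h'.reducePair_eq hN', h.reducePair_eq hN] at hemb
  have hf : ∀ t ∈ N'.taxa, f (N'.label t) = N.label t := fun t ht => by
    simpa using hemb.2.2.1 t (by simpa using ht)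
  have hs' := h'.isSuppressible_py hN'
  obtain ⟨G₁, h₁⟩ := hemb.of_suppress (h'.isSuppressible_px hN') (h.isSuppressible_px hN)
    (hs'.suppress_V ▸ Finset.mem_erase.mpr ⟨h'.z_ne, (hN'.mem_V_of_mem_E h'.edge_z_px).1⟩)
    (hs'.suppress_V ▸ Finset.mem_erase.mpr
      ⟨hN'.label_ne_of_mem_E hx' h'.parent_y.1, hN'.label_mem_V hx'⟩)
    ((h.isSuppressible_py hN).suppress_V ▸ Finset.mem_erase.mpr
      ⟨h.px_ne_py hN, (hN.mem_V_of_mem_E h.edge_py_px).2⟩)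
    (h'.not_mem_suppress_E hN') (h'.isSink_suppress hN') (h.isSink_suppress hN)
    (h.isSoleParent_suppress hN)
    (fun t ht => by simpa using hN'.label_ne_of_mem_E (t := t) (by simpa using ht) h'.child_px.1)
    (hf x hx')
  obtain ⟨G₂, h₂⟩ := h₁.of_suppress hs' (h.isSuppressible_py hN)
    (hN'.mem_V_of_mem_E h'.parent_py.1).1 (hN'.label_mem_V hy')
    (hN.mem_V_of_mem_E h.edge_py_px).1 (h'.not_mem_delEdge_E hN')
    ((hN'.isSink_label hy').delEdge _) ((hN.isSink_label h.isRetCherry.2.1).delEdge _)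
    (h.parent_y.delEdge fun hd => hN.label_ne_of_mem_E h.isRetCherry.2.1 h.child_px.1
      (congrArg Prod.snd hd))
    (fun t ht => hN'.label_ne_of_mem_E ht h'.parent_y.1)
    (by rw [Function.update_of_ne (hN'.label_ne_of_mem_E hy' h'.child_px.1)]; exact hf y hy')
  exact ⟨_, _, h₂.of_delEdge h.edge_py_px (Function.update_self _ _ _)
    (by rw [Function.update_of_ne (h'.px_ne_py hN'), Function.update_self])⟩

/-- A reticulated-cherry reduction keeps the leaf `x`, a cherry reduction removes it. -/
lemma IsRetCherryShape.not_isEmbedding_of_isCherryShape {px' py' z' gpy' p gp : ℕ}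
    (h' : N'.IsRetCherryShape x y px' py' z' gpy') (h : N.IsCherryShape x y p gp) :
    ¬ IsEmbedding (N'.reducePair (x, y)) (N.reducePair (x, y)) f g := by
  intro hemb
  obtain ⟨hx', -⟩ := h'.isRetCherry
  rw [h'.reducePair_eq hN', h.reducePair_eq] at hemb
  have hfx : f (N'.label x) = N.label x := by simpa using hemb.2.2.1 x (by simpa using hx')
  have hxV := hemb.1 (N'.label x) (by
    rw [(h'.isSuppressible_px hN').suppress_V, (h'.isSuppressible_py hN').suppress_V]
    exact Finset.mem_erase.mpr ⟨hN'.label_ne_of_mem_E hx' h'.child_px.1,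
      Finset.mem_erase.mpr ⟨hN'.label_ne_of_mem_E hx' h'.parent_y.1, hN'.label_mem_V hx'⟩⟩)
  rw [(h.isSuppressible hN).suppress_V, hfx] at hxV
  exact (Finset.mem_erase.mp (Finset.mem_of_mem_erase hxV)).1 rfl

theorem IsCherryShape.isSubnetwork_of_isRetCherryShape {p' gp' px py z gpy : ℕ}
    (h' : N'.IsCherryShape x y p' gp') (h : N.IsRetCherryShape x y px py z gpy)
    (htaxa : N'.taxa ⊆ N.taxa)
    (hemb : IsEmbedding (N'.reducePair (x, y)) (N.reducePair (x, y)) f g) :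
    IsSubnetwork N' N := by
  obtain ⟨hx', hy', hxy, -⟩ := h'.isCherry
  obtain ⟨hx, hy, -⟩ := h.isRetCherry
  have hfx := h'.apply_ne_of_isSink hN' hemb (h.isSink_reducePair hN) fun t ht htx => by
    rw [h.reducePair_eq hN]; simpa using hN.label_ne (htaxa ht) hx htx
  have hK := h.isEmbedding_suppress_of_avoids hN hemb fun e he =>
    hfx _ (h'.mem_V_of_mem_reducePair_E hN' he).2
  rw [h'.reducePair_eq] at hK hfx
  obtain ⟨G, hG⟩ := h'.exists_isEmbedding_delLeaf hN' hK (h.isSuppressible_py hN)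
    (hN.mem_V_of_mem_E h.edge_py_px).1 ((hN.isSink_label hy).delEdge _)
    (h.parent_y.delEdge fun hd => hN.label_ne_of_mem_E hy h.child_px.1 (congrArg Prod.snd hd))
    (by simpa using hK.2.2.1 y (by simpa using ⟨hxy.symm, hy'⟩))
  have hft : ∀ u ∈ (N'.delLeaf x).V, Function.update f p' py u ≠ N.label x := by
    intro u hu
    by_cases hup : u = p'
    · rw [hup, Function.update_self]
      exact (hN.label_ne_of_mem_E hx h.parent_y.1).symm
    · rw [Function.update_of_ne hup]
      rw [(h'.isSuppressible hN').suppress_V] at hfx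
      exact hfx u (Finset.mem_erase.mpr ⟨hup, hu⟩)
  have hfree := h.not_mem_pathEdges_of_avoids hN hG fun e he =>
    hft e.2 (Finset.mem_erase.mpr ⟨(mem_delLeaf_E.mp he).2.2,
      (hN'.mem_V_of_mem_E (mem_delLeaf_E.mp he).1).2⟩)
  obtain ⟨G', hG'⟩ := hG.of_delLeaf (N := N) hN' hx' h'.parent_x.1 subset_rfl
    (Finset.erase_subset _ _) rfl (hN.label_mem_V hx)
    (by simp [isDipath_iff, pathEdges, h.edge_py_px, h.parent_x.1]) (by simp) (by simp) hft hfree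
  exact ⟨_, _, hG'⟩

end Lifting

end Network

open Network

/-- for binary networks and a pair `c` reducible in both, if
`N'c` is a subnetwork of `Nc` then `N'` is a subnetwork of `N`. -/
theorem binary_subnetwork_lifts_along_reduction (X : Type) (N N' : Network X)
    (hN : N.IsPhylo) (hN' : N'.IsPhylo) (hb : N.IsBinary) (hb' : N'.IsBinary)
    (htaxa : N'.taxa ⊆ N.taxa) (c : X × X)
    (hc : N.ReduciblePair c.1 c.2) (hc' : N'.ReduciblePair c.1 c.2)
    (hsub : IsSubnetwork (N'.reducePair c) (N.reducePair c)) :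
    IsSubnetwork N' N := by
  obtain ⟨f, g, hemb⟩ := hsub
  rcases hc' with hC' | hR'
  · obtain ⟨p', gp', h'⟩ := hC'.exists_shape hN' hb'
    rcases hc with hC | hR
    · obtain ⟨p, gp, h⟩ := hC.exists_shape hN hb
      exact h'.isSubnetwork_of_isCherryShape hN' hN h hemb
    · obtain ⟨px, py, z, gpy, h⟩ := hR.exists_shape hN hb
      exact h'.isSubnetwork_of_isRetCherryShape hN' hN h htaxa hemb
  · obtain ⟨px', py', z', gpy', h'⟩ := hR'.exists_shape hN' hb'
    rcases hc with hC | hR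
    · obtain ⟨p, gp, h⟩ := hC.exists_shape hN hb
      exact absurd hemb (h'.not_isEmbedding_of_isCherryShape hN' hN h)
    · obtain ⟨px, py, z, gpy, h⟩ := hR.exists_shape hN hb
      exact h'.isSubnetwork_of_isRetCherryShape hN' hN h hemb
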